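/- arXiv:2203.12087 — 4 statements merged into one kernel-verified Lean document; each statement's English description precedes it below -/
import Mathlib

section
/- Let G'' : A → B and G' : B → C be functors such that: G'' has a left adjoint, G'' reflects isomorphisms, A has coequalizers of reflexive pairs and G'' preserves them, and G' is monadic. Then the composite G' ∘ G'' is monadic. -/
/-!
The composite `G'' ⋙ G'` is a right adjoint (compose the adjunctions) and reflects isomorphisms.
Beck's argument shows that a right adjoint `G` with left adjoint `F` that reflects isomorphisms is
monadic as soon as, for every algebra `(X, a)`, the main pair `(F a, ε_{F X})` has a coequalizer
that `G` preserves. For the composite, the main pair is reflexive (with common section `F η_X`),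
so `A` has its coequalizer and `G''` preserves it; and its image under `G'' ⋙ G'` is the split Beck fork, so `G''` maps it to a
`G'`-split pair, whose coequalizer the monadic functor `G'` creates and hence preserves.

Mathlib's crude monadicity theorem does not apply: it asks for all reflexive coequalizers to be
preserved, which `G'` need not do.
-/

open CategoryTheory CategoryTheory.Limits

namespace CategoryTheory.Monad

variable {C D : Type*} [Category C] [Category D] {F : C ⥤ D} {G : D ⥤ C} (adj : F ⊣ G)

instance isReflexivePair_map_a_counit (X : adj.toMonad.Algebra) :
    IsReflexivePair (F.map X.a) (adj.counit.app (F.obj X.A)) :=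
  IsReflexivePair.mk' (F.map (adj.unit.app X.A))
    ((F.map_comp _ _).symm.trans ((congrArg F.map X.unit).trans (F.map_id _)))
    (adj.left_triangle_components X.A)

instance isSplitPair_map_a_counit (X : adj.toMonad.Algebra) :
    G.IsSplitPair (F.map X.a) (adj.counit.app (F.obj X.A)) :=
  ⟨_, _, ⟨beckSplitCoequalizer X⟩⟩

lemma toMonad_map_comp_map_counit_of_a_comp_eq_map {X : adj.toMonad.Algebra} {Q : D}
    {π : F.obj X.A ⟶ Q} {f : X.A ⟶ G.obj Q} (hf : X.a ≫ f = G.map π) :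
    adj.toMonad.map f ≫ G.map (adj.counit.app Q) = X.a ≫ f := by
  have : IsSplitEpi X.a := IsSplitEpi.mk' ⟨_, X.unit⟩
  rw [← cancel_epi (adj.toMonad.map X.a), ← X.assoc_assoc, hf]
  change G.map (F.map X.a) ≫ G.map (F.map f) ≫ G.map (adj.counit.app Q) = _
  simp only [← G.map_comp, ← F.map_comp_assoc, hf]
  exact (congrArg G.map (adj.counit_naturality π)).trans (G.map_comp _ _)

variable
  [hcoeq : ∀ X : adj.toMonad.Algebra, HasCoequalizer (F.map X.a) (adj.counit.app (F.obj X.A))]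
  [hpreserves : ∀ X : adj.toMonad.Algebra,
    PreservesColimit (parallelPair (F.map X.a) (adj.counit.app (F.obj X.A))) G]

/-- The Beck fork of `X` and the image under `G` of the coequalizer of the main pair are both
coequalizers of `(T a, μ_A)`, so `X` is isomorphic to the comparison of that coequalizer. -/
lemma comparison_essSurj_of_mainPairs : (comparison adj).EssSurj where
  mem_essImage X := by
    let c := isColimitOfHasCoequalizerOfPreservesColimit G (F.map X.a) (adj.counit.app (F.obj X.A))
    let e := (beckCoequalizer X).coconePointUniqueUpToIso c
    exact ⟨coequalizer _ _, ⟨(Algebra.isoMk e (toMonad_map_comp_map_counit_of_a_comp_eq_map adj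
      ((beckCoequalizer X).comp_coconePointUniqueUpToIso_hom c WalkingParallelPair.one))).symm⟩⟩

variable [G.ReflectsIsomorphisms]

noncomputable def isColimitCounitCofork (B : D) :
    IsColimit (Cofork.ofπ (adj.counit.app B) (adj.counit_naturality _) :
      Cofork (F.map (G.map (adj.counit.app B))) (adj.counit.app (F.obj (G.obj B)))) :=
  have : HasCoequalizer (F.map (G.map (adj.counit.app B))) (adj.counit.app (F.obj (G.obj B))) :=
    hcoeq ((comparison adj).obj B)
  have : PreservesColimit
      (parallelPair (F.map (G.map (adj.counit.app B))) (adj.counit.app (F.obj (G.obj B)))) G :=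
    hpreserves ((comparison adj).obj B)
  have : ReflectsColimit
      (parallelPair (F.map (G.map (adj.counit.app B))) (adj.counit.app (F.obj (G.obj B)))) G :=
    reflectsColimit_of_reflectsIsomorphisms _ G
  isColimitOfIsColimitCoforkMap G _ (beckCoequalizer ((comparison adj).obj B))

lemma comparison_faithful_of_mainPairs : (comparison adj).Faithful where
  map_injective {B B'} f₁ f₂ h := by
    have : Epi (adj.counit.app B) := Cofork.IsColimit.epi (isColimitCounitCofork adj B)
    have hG : G.map f₁ = G.map f₂ := congrArg Algebra.Hom.f h
    rw [← cancel_epi (adj.counit.app B)]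
    simpa using congrArg (fun g => F.map g ≫ adj.counit.app B') hG

lemma exists_map_eq_of_comm {B B' : D} (g : G.obj B ⟶ G.obj B')
    (hg : G.map (F.map g) ≫ G.map (adj.counit.app B') = G.map (adj.counit.app B) ≫ g) :
    ∃ f : B ⟶ B', G.map f = g := by
  have hw : F.map (G.map (adj.counit.app B)) ≫ F.map g ≫ adj.counit.app B' =
      adj.counit.app (F.obj (G.obj B)) ≫ F.map g ≫ adj.counit.app B' := by
    apply (adj.homEquiv _ _).injective
    simp [Adjunction.homEquiv_unit, ← hg]
  let f := Cofork.IsColimit.desc (isColimitCounitCofork adj B) _ hw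
  have hf : adj.counit.app B ≫ f = F.map g ≫ adj.counit.app B' :=
    Cofork.IsColimit.π_desc' (isColimitCounitCofork adj B) _ hw
  refine ⟨f, ?_⟩
  calc G.map f = adj.unit.app (G.obj B) ≫ G.map (adj.counit.app B ≫ f) := by simp
    _ = g := by simp [hf]

lemma comparison_full_of_mainPairs : (comparison adj).Full where
  map_surjective {B B'} h := by
    obtain ⟨f, hf⟩ := exists_map_eq_of_comm adj h.f h.h
    exact ⟨f, Algebra.Hom.ext hf⟩

lemma comparison_isEquivalence_of_mainPairs : (comparison adj).IsEquivalence where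
  faithful := comparison_faithful_of_mainPairs adj
  full := comparison_full_of_mainPairs adj
  essSurj := comparison_essSurj_of_mainPairs adj

end CategoryTheory.Monad

namespace CategoryTheory.Limits

lemma preservesColimit_comp_of_isSplitPair {C D E : Type*} [Category C] [Category D] [Category E]
    (K : WalkingParallelPair ⥤ D) (R : D ⥤ C) (H : C ⥤ E)
    [h : R.IsSplitPair (K.map .left) (K.map .right)] : PreservesColimit (K ⋙ R) H :=
  have : HasSplitCoequalizer ((K ⋙ R).map .left) ((K ⋙ R).map .right) := h
  preservesColimit_of_iso_diagram H (diagramIsoParallelPair (K ⋙ R)).symm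

end CategoryTheory.Limits

namespace CategoryTheory.MonadicRightAdjoint

variable {C D : Type*} [Category C] [Category D]

instance reflectsIsomorphisms (R : D ⥤ C) [MonadicRightAdjoint R] : R.ReflectsIsomorphisms where
  reflects f _ := by
    rw [← isIso_iff_of_reflects_iso f (Monad.comparison (monadicAdjunction R) ⋙ Monad.forget _),
      NatIso.isIso_map_iff (Monad.comparisonForget _)]
    infer_instance

lemma preservesColimit_of_isSplitPair (R : D ⥤ C) [MonadicRightAdjoint R]
    (K : WalkingParallelPair ⥤ D) [h : R.IsSplitPair (K.map .left) (K.map .right)] :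
    PreservesColimit K R :=
  let L := monadicLeftAdjoint R
  have : PreservesColimit (K ⋙ R) (L ⋙ R) := preservesColimit_comp_of_isSplitPair K R _
  have : (R ⋙ L ⋙ R).IsSplitPair (K.map .left) (K.map .right) := map_is_split_pair (L ⋙ R) _ _
  have : PreservesColimit ((K ⋙ R) ⋙ L ⋙ R) (L ⋙ R) :=
    preservesColimit_comp_of_isSplitPair K (R ⋙ L ⋙ R) _
  have := monadicCreatesColimitOfPreservesColimit R K
  have : HasColimit (K ⋙ R) :=
    have : HasSplitCoequalizer ((K ⋙ R).map .left) ((K ⋙ R).map .right) := h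
    hasColimit_of_iso (diagramIsoParallelPair (K ⋙ R))
  preservesColimit_of_createsColimit_and_hasColimit K R

lemma comp_preservesColimit_of_isSplitPair {A : Type*} [Category A] (G'' : A ⥤ D) (R : D ⥤ C)
    [MonadicRightAdjoint R] {X Y : A} (f g : X ⟶ Y) [PreservesColimit (parallelPair f g) G'']
    [h : (G'' ⋙ R).IsSplitPair f g] : PreservesColimit (parallelPair f g) (G'' ⋙ R) :=
  have : R.IsSplitPair ((parallelPair f g ⋙ G'').map .left) ((parallelPair f g ⋙ G'').map .right) :=
    h
  have := preservesColimit_of_isSplitPair R (parallelPair f g ⋙ G'')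
  comp_preservesColimit G'' R

end CategoryTheory.MonadicRightAdjoint

/-- The composite of a functor satisfying the Crude Tripleability Theorem
(left adjoint, reflects isomorphisms, domain has reflexive coequalizers and the
functor preserves them) followed by a monadic functor is monadic. -/
theorem comp_monadic_of_ctt {A B C : Type*} [Category A] [Category B] [Category C]
    (G'' : A ⥤ B) (G' : B ⥤ C)
    [G''.IsRightAdjoint] [G''.ReflectsIsomorphisms] [HasReflexiveCoequalizers A]
    (hpres : ∀ ⦃X Y : A⦄ (f g : X ⟶ Y), IsReflexivePair f g →
      Nonempty (PreservesColimit (parallelPair f g) G''))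
    [MonadicRightAdjoint G'] :
    Nonempty (MonadicRightAdjoint (G'' ⋙ G')) := by
  let F := monadicLeftAdjoint G' ⋙ G''.leftAdjoint
  let adj : F ⊣ G'' ⋙ G' := (monadicAdjunction G').comp (Adjunction.ofIsRightAdjoint G'')
  have (X : adj.toMonad.Algebra) : HasCoequalizer (F.map X.a) (adj.counit.app (F.obj X.A)) :=
    HasReflexiveCoequalizers.has_coeq _ _
  have (X : adj.toMonad.Algebra) :
      PreservesColimit (parallelPair (F.map X.a) (adj.counit.app (F.obj X.A))) (G'' ⋙ G') :=
    have := (hpres _ _ (Monad.isReflexivePair_map_a_counit adj X)).some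
    MonadicRightAdjoint.comp_preservesColimit_of_isSplitPair G'' G' _ _
  exact ⟨⟨F, adj, Monad.comparison_isEquivalence_of_mainPairs adj⟩⟩
end

section
/- Any functor satisfying the hypotheses of the Crude Tripleability Theorem is monadic: if G : A → C has a left adjoint, reflects isomorphisms, and A has coequalizers of reflexive pairs which G preserves, then G is monadic. -/
/-!
Mathlib proves crude monadicity when both categories have the same hom universe
(`Monad.monadicOfHasPreservesReflexiveCoequalizersOfReflectsIsomorphisms`). Lifting the hom
types of both categories to a common universe with `ULiftHom` preserves the hypotheses, and the
comparison functor of the lifted adjunction agrees, up to a definitional equivalence of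
Eilenberg–Moore categories, with the original one.
-/

open CategoryTheory CategoryTheory.Limits

universe w₁ w₂ v₁ v₂ u₁ u₂

namespace CategoryTheory

variable {A : Type u₁} {C : Type u₂} [Category.{v₁} A] [Category.{v₂} C]

theorem IsReflexivePair.map (H : A ⥤ C) {X Y : A} (f g : X ⟶ Y) [IsReflexivePair f g] :
    IsReflexivePair (H.map f) (H.map g) :=
  .mk' (H.map (commonSection f g)) (by rw [← H.map_comp, section_comp_left, H.map_id])
    (by rw [← H.map_comp, section_comp_right, H.map_id])

instance : (ULiftHom.down : ULiftHom.{w₁} A ⥤ A).IsEquivalence :=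
  ULiftHom.equiv.isEquivalence_inverse

instance : (ULiftHom.up : A ⥤ ULiftHom.{w₁} A).IsEquivalence :=
  ULiftHom.equiv.isEquivalence_functor

instance [HasReflexiveCoequalizers A] : HasReflexiveCoequalizers (ULiftHom.{w₁} A) := by
  rw [← hasReflexiveCoequalizers_iff] at *
  exact Adjunction.hasColimitsOfShape_of_equivalence ULiftHom.down

def Functor.uliftHom (G : A ⥤ C) : ULiftHom.{w₁} A ⥤ ULiftHom.{w₂} C :=
  ULiftHom.down ⋙ G ⋙ ULiftHom.up

namespace Functor

variable (G : A ⥤ C)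

instance [G.ReflectsIsomorphisms] : (G.uliftHom.{w₁, w₂}).ReflectsIsomorphisms := by
  unfold uliftHom; infer_instance

theorem uliftHom_preservesColimit_parallelPair {X Y : ULiftHom.{w₁} A} (f g : X ⟶ Y)
    [PreservesColimit (parallelPair f.down g.down) G] :
    PreservesColimit (parallelPair f g) (G.uliftHom.{w₁, w₂}) := by
  have e : parallelPair f.down g.down ≅ parallelPair f g ⋙ ULiftHom.down :=
    (diagramIsoParallelPair (parallelPair f g ⋙ ULiftHom.down)).symm
  have := preservesColimit_of_iso_diagram G e
  unfold uliftHom; infer_instance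

end Functor

def Adjunction.uliftHom {F : C ⥤ A} {G : A ⥤ C} (adj : F ⊣ G) :
    F.uliftHom.{w₂, w₁} ⊣ G.uliftHom.{w₁, w₂} :=
  Adjunction.mkOfUnitCounit
    { unit := { app X := ⟨adj.unit.app X.objDown⟩
                naturality _ _ f := congrArg ULift.up (adj.unit.naturality f.down) }
      counit := { app X := ⟨adj.counit.app X.objDown⟩
                  naturality _ _ f := congrArg ULift.up (adj.counit.naturality f.down) }
      left_triangle := by
        ext X
        exact congrArg ULift.up ((_ ≫= Category.id_comp _).trans (adj.left_triangle_components _))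
      right_triangle := by
        ext X
        exact congrArg ULift.up ((_ ≫= Category.id_comp _).trans (adj.right_triangle_components _)) }

namespace Monad

variable {F : C ⥤ A} {G : A ⥤ C} (adj : F ⊣ G)

def algebraUliftHomEquivalence :
    adj.toMonad.Algebra ≌ (adj.uliftHom.{w₁, w₂}).toMonad.Algebra where
  functor :=
    { obj X := { A := ULiftHom.objUp X.A, a := ⟨X.a⟩
                 unit := congrArg ULift.up X.unit
                 assoc := congrArg ULift.up X.assoc }
      map f := { f := ⟨f.f⟩, h := congrArg ULift.up f.h } }
  inverse :=
    { obj X := { A := X.A.objDown, a := X.a.down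
                 unit := congrArg ULift.down X.unit
                 assoc := congrArg ULift.down X.assoc }
      map f := { f := f.f.down, h := congrArg ULift.down f.h } }
  unitIso := Iso.refl _
  counitIso := Iso.refl _

theorem comparison_isEquivalence_of_uliftHom
    [(comparison adj.uliftHom.{w₁, w₂}).IsEquivalence] : (comparison adj).IsEquivalence := by
  have : (comparison adj ⋙ (algebraUliftHomEquivalence adj).functor).IsEquivalence :=
    Functor.isEquivalence_of_iso (Iso.refl (ULiftHom.up ⋙ comparison adj.uliftHom))
  exact Functor.isEquivalence_of_comp_right _ (algebraUliftHomEquivalence adj).functor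

theorem comparison_isEquivalence_of_preservesReflexiveCoequalizers [G.ReflectsIsomorphisms]
    [HasReflexiveCoequalizers A]
    (hpres : ∀ ⦃X Y : A⦄ (f g : X ⟶ Y), IsReflexivePair f g →
      Nonempty (PreservesColimit (parallelPair f g) G)) :
    (comparison adj).IsEquivalence := by
  -- both lifted categories have hom universe `max v₁ v₂`
  have : PreservesColimitOfIsReflexivePair G.uliftHom.{v₂, v₁} := .mk fun _ _ f g _ =>
    have := (hpres f.down g.down (IsReflexivePair.map ULiftHom.down f g)).some
    G.uliftHom_preservesColimit_parallelPair f g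
  have := (monadicOfHasPreservesReflexiveCoequalizersOfReflectsIsomorphisms adj.uliftHom).eqv
  exact comparison_isEquivalence_of_uliftHom adj

end Monad

end CategoryTheory

/-- The Crude Tripleability (crude monadicity) Theorem: if `G` has a left adjoint,
reflects isomorphisms, and its domain has coequalizers of reflexive pairs which `G`
preserves, then `G` is monadic. -/
theorem crude_monadicity {A C : Type*} [Category A] [Category C] (G : A ⥤ C)
    [G.IsRightAdjoint] [G.ReflectsIsomorphisms] [HasReflexiveCoequalizers A]
    (hpres : ∀ ⦃X Y : A⦄ (f g : X ⟶ Y), IsReflexivePair f g →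
      Nonempty (PreservesColimit (parallelPair f g) G)) :
    Nonempty (MonadicRightAdjoint G) :=
  ⟨⟨_, Adjunction.ofIsRightAdjoint G,
    Monad.comparison_isEquivalence_of_preservesReflexiveCoequalizers _ hpres⟩⟩
end

section
/- Let X be an infinite compact Hausdorff space and let F = (F₀, …, Fₙ) be any finite partition of X. Then there exists a continuous function f : X → ℝ with ‖f‖ = 1 such that for every function f' : X → ℝ that is constant on each part Fᵢ, ‖f − f'‖_∞ ≥ 1. -/
/-- On an infinite compact Hausdorff space, for any finite partition there is a norm-one
continuous function at sup-distance at least `1` from every function constant on each part. -/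
theorem exists_far_from_partition_constant
    (X : Type*) [TopologicalSpace X] [CompactSpace X] [T2Space X] [Infinite X]
    {ι : Type*} [Finite ι] (F : ι → Set X)
    (hdisj : Pairwise (Function.onFun Disjoint F))
    (hcover : (⋃ i, F i) = Set.univ) :
    ∃ f : C(X, ℝ), ‖f‖ = 1 ∧
      ∀ f' : X → ℝ, (∀ i, ∀ x ∈ F i, ∀ y ∈ F i, f' x = f' y) →
        ∃ x : X, 1 ≤ |f x - f' x| := by
  -- some part contains two distinct points
  obtain ⟨i, x, y, hx, hy, hxy⟩ :
      ∃ i, ∃ x y : X, x ∈ F i ∧ y ∈ F i ∧ x ≠ y := by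
    by_contra h
    push_neg at h
    have hinj : Function.Injective (fun x : X => Classical.choose
        (Set.mem_iUnion.mp (hcover ▸ Set.mem_univ x : x ∈ ⋃ i, F i))) := by
      intro a b hab
      have ha := Classical.choose_spec
        (Set.mem_iUnion.mp (hcover ▸ Set.mem_univ a : a ∈ ⋃ i, F i))
      have hb := Classical.choose_spec
        (Set.mem_iUnion.mp (hcover ▸ Set.mem_univ b : b ∈ ⋃ i, F i))
      simp only at hab
      rw [hab] at ha
      exact h _ a b ha hb
    exact (Finite.of_injective _ hinj).not_infinite (by infer_instance)
  obtain ⟨g, hgx, hgy, hg01⟩ := exists_continuous_zero_one_of_isClosed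
    (isClosed_singleton (x := x)) (isClosed_singleton (x := y))
    (Set.disjoint_singleton.mpr hxy)
  set f : C(X, ℝ) := 2 • g - 1 with hf
  have hfval : ∀ z, f z = 2 * g z - 1 := fun z => by
    simp [hf, two_smul]; ring
  have hfx : f x = -1 := by rw [hfval, hgx rfl]; norm_num
  have hfy : f y = 1 := by rw [hfval, hgy rfl]; norm_num
  have hbound : ∀ z, |f z| ≤ 1 := by
    intro z
    have := hg01 z
    simp only [Set.mem_Icc] at this
    rw [hfval, abs_le]
    constructor <;> linarith [this.1, this.2]
  refine ⟨f, ?_, ?_⟩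
  · apply le_antisymm
    · exact ContinuousMap.norm_le _ zero_le_one |>.mpr hbound
    · calc (1 : ℝ) = |f y| := by rw [hfy]; norm_num
        _ ≤ ‖f‖ := f.norm_coe_le_norm y
  · intro f' hf'
    have hc : f' x = f' y := hf' i x hx y hy
    by_cases hle : 1 ≤ |f x - f' x|
    · exact ⟨x, hle⟩
    · refine ⟨y, ?_⟩
      push_neg at hle
      rw [hfx] at hle
      rw [hfy, ← hc]
      rw [abs_lt] at hle
      rw [le_abs]
      left; linarith [hle.1, hle.2]
end

section
/- Let A be a unital C*-algebra, n a positive integer, ζ ∈ ℂ a primitive n-th root of unity (so ζ is unimodular and ζⁿ = 1), and a, b ∈ A with b invertible, bⁿ = 1 and b a b⁻¹ = ζ a. For another invertible b' ∈ A with b'ⁿ = 1, define a' := (1/n) Σ_{s=0}^{n−1} ζ^{−s} b'^s a b'^{−s}. Then b' a' b'⁻¹ = ζ a', i.e. a' is a ζ-eigenvector for conjugation by b'. Moreover, if ‖b − b'‖ ≤ ε and ‖b⁻¹ − b'⁻¹‖ ≤ ε, with ‖a‖ ≤ 1 and all of b, b', b⁻¹, b'⁻¹ of norm ≤ 1, then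 ‖a − a'‖ ≤ C·ε for a constant C depending only on n. -/
lemma norm_pow_le_one' {A : Type} [NormedRing A] (x : A)
    (hone : ‖(1 : A)‖ ≤ 1) (hx : ‖x‖ ≤ 1) (k : ℕ) : ‖x ^ k‖ ≤ 1 := by
  induction k with
  | zero => simpa using hone
  | succ m ih =>
    calc ‖x ^ (m + 1)‖ = ‖x ^ m * x‖ := by rw [pow_succ]
      _ ≤ ‖x ^ m‖ * ‖x‖ := norm_mul_le _ _
      _ ≤ 1 * 1 := mul_le_mul ih hx (norm_nonneg _) zero_le_one
      _ = 1 := one_mul 1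

lemma pow_sub_pow_norm_le' {A : Type} [NormedRing A] (x y : A)
    (hone : ‖(1 : A)‖ ≤ 1) (hx : ‖x‖ ≤ 1) (hy : ‖y‖ ≤ 1) (s : ℕ) :
    ‖x ^ s - y ^ s‖ ≤ s * ‖x - y‖ := by
  induction s with
  | zero => simp
  | succ k ih =>
    have hxk : ‖x ^ k‖ ≤ 1 := norm_pow_le_one' x hone hx k
    have h1 : x ^ (k+1) - y ^ (k+1) = x ^ k * (x - y) + (x ^ k - y ^ k) * y := by
      rw [pow_succ, pow_succ]; noncomm_ring
    calc ‖x ^ (k+1) - y ^ (k+1)‖ ≤ ‖x ^ k * (x - y)‖ + ‖(x ^ k - y ^ k) * y‖ := by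
          rw [h1]; exact norm_add_le _ _
      _ ≤ ‖x ^ k‖ * ‖x - y‖ + ‖x ^ k - y ^ k‖ * ‖y‖ :=
          add_le_add (norm_mul_le _ _) (norm_mul_le _ _)
      _ ≤ 1 * ‖x - y‖ + (k * ‖x - y‖) * 1 := by gcongr
      _ = (k+1 : ℕ) * ‖x - y‖ := by push_cast; ring

/-- Averaging over conjugation by an order-`n` unitary projects onto the
`ζ`-eigenspace of that conjugation, and the average is norm-controlled by the
distance between the two implementing invertibles, with a constant depending only
on `n`. -/
theorem conjugation_average_eigenvector (n : ℕ) (hn : 0 < n) (ζ : ℂ)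
    (hζ : IsPrimitiveRoot ζ n) :
    ∃ C : ℝ, 0 ≤ C ∧
      ∀ (A : Type) [CStarAlgebra A] (a : A) (b b' : Aˣ),
        b ^ n = 1 → b' ^ n = 1 →
        (b : A) * a * ((b⁻¹ : Aˣ) : A) = ζ • a →
        (((b' : A) * ((n : ℂ)⁻¹ • ∑ s ∈ Finset.range n,
            (ζ ^ s)⁻¹ • (((b' ^ s : Aˣ) : A) * a * (((b' ^ s)⁻¹ : Aˣ) : A)))
              * ((b'⁻¹ : Aˣ) : A)
          = ζ • ((n : ℂ)⁻¹ • ∑ s ∈ Finset.range n,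
            (ζ ^ s)⁻¹ • (((b' ^ s : Aˣ) : A) * a * (((b' ^ s)⁻¹ : Aˣ) : A)))) ∧
        (∀ ε : ℝ, ‖a‖ ≤ 1 →
          ‖(b : A)‖ ≤ 1 → ‖(b' : A)‖ ≤ 1 →
          ‖((b⁻¹ : Aˣ) : A)‖ ≤ 1 → ‖((b'⁻¹ : Aˣ) : A)‖ ≤ 1 →
          ‖(b : A) - (b' : A)‖ ≤ ε → ‖((b⁻¹ : Aˣ) : A) - ((b'⁻¹ : Aˣ) : A)‖ ≤ ε →
          ‖a - ((n : ℂ)⁻¹ • ∑ s ∈ Finset.range n,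
            (ζ ^ s)⁻¹ • (((b' ^ s : Aˣ) : A) * a * (((b' ^ s)⁻¹ : Aˣ) : A)))‖ ≤ C * ε)) := by
  have hζ0 : ζ ≠ 0 := hζ.ne_zero hn.ne'
  have hζn : ζ ^ n = 1 := hζ.pow_eq_one
  have hζnorm : ‖ζ‖ = 1 := hζ.norm'_eq_one hn.ne'
  have hncast : (n : ℂ) ≠ 0 := Nat.cast_ne_zero.mpr hn.ne'
  refine ⟨2 * n, by positivity, ?_⟩
  intro A _ a b b' hbn hb'n hconj
  set g : ℕ → A := fun s =>
    (ζ ^ s)⁻¹ • (((b' ^ s : Aˣ) : A) * a * (((b' ^ s)⁻¹ : Aˣ) : A)) with hg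
  -- conjugation by b' shifts the index
  have key : ∀ s, (b' : A) * g s * ((b'⁻¹ : Aˣ) : A) = ζ • g (s + 1) := by
    intro s
    simp only [hg, mul_smul_comm, smul_mul_assoc, smul_smul]
    rw [pow_succ' b' s, mul_inv_rev, Units.val_mul, Units.val_mul]
    rw [show ζ * (ζ ^ (s+1))⁻¹ = (ζ ^ s)⁻¹ by
      field_simp; rw [pow_succ']]
    congr 1
    simp only [mul_assoc]
  have hgn : g n = g 0 := by
    simp only [hg]
    rw [hb'n, hζn]
    simp
  have hshift : ∑ s ∈ Finset.range n, g (s + 1) = ∑ s ∈ Finset.range n, g s := by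
    have h1 := Finset.sum_range_succ' g n
    have h2 := Finset.sum_range_succ g n
    have h3 : (∑ s ∈ Finset.range n, g (s + 1)) + g 0
        = (∑ s ∈ Finset.range n, g s) + g 0 := by
      rw [← h1, h2, hgn]
    exact add_right_cancel h3
  constructor
  · calc (b' : A) * ((n : ℂ)⁻¹ • ∑ s ∈ Finset.range n, g s) * ((b'⁻¹ : Aˣ) : A)
        = (n : ℂ)⁻¹ • ∑ s ∈ Finset.range n, ((b' : A) * g s * ((b'⁻¹ : Aˣ) : A)) := by
          rw [mul_smul_comm, smul_mul_assoc, Finset.mul_sum, Finset.sum_mul]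
      _ = (n : ℂ)⁻¹ • ∑ s ∈ Finset.range n, ζ • g (s + 1) := by
          congr 1
          exact Finset.sum_congr rfl (fun s _ => key s)
      _ = (n : ℂ)⁻¹ • (ζ • ∑ s ∈ Finset.range n, g (s + 1)) := by
          simp only [Finset.smul_sum]
      _ = ζ • ((n : ℂ)⁻¹ • ∑ s ∈ Finset.range n, g s) := by
          rw [hshift, smul_comm]
  · intro ε ha hb1 hb'1 hbi1 hb'i1 he hei
    have hε0 : 0 ≤ ε := le_trans (norm_nonneg _) he
    have hone : ‖(1 : A)‖ ≤ 1 := by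
      have h := CStarRing.norm_star_mul_self (x := (1 : A))
      simp only [star_one, one_mul] at h
      nlinarith [norm_nonneg (1 : A)]
    -- b-conjugation eigenvalue relation for powers
    have hpow : ∀ s : ℕ, ((b ^ s : Aˣ) : A) * a * (((b ^ s)⁻¹ : Aˣ) : A) = (ζ ^ s) • a := by
      intro s
      induction s with
      | zero => simp
      | succ k ih =>
        rw [pow_succ' b k, mul_inv_rev, Units.val_mul, Units.val_mul]
        calc (b : A) * ((b ^ k : Aˣ) : A) * a * ((((b ^ k)⁻¹ : Aˣ) : A) * ((b⁻¹ : Aˣ) : A))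
            = (b : A) * (((b ^ k : Aˣ) : A) * a * (((b ^ k)⁻¹ : Aˣ) : A)) * ((b⁻¹ : Aˣ) : A) := by
              simp only [mul_assoc]
          _ = (b : A) * ((ζ ^ k) • a) * ((b⁻¹ : Aˣ) : A) := by rw [ih]
          _ = (ζ ^ k) • ((b : A) * a * ((b⁻¹ : Aˣ) : A)) := by
              rw [mul_smul_comm, smul_mul_assoc]
          _ = ζ ^ (k + 1) • a := by rw [hconj, smul_smul, ← pow_succ]
    set f : ℕ → A := fun s =>
      (ζ ^ s)⁻¹ • (((b ^ s : Aˣ) : A) * a * (((b ^ s)⁻¹ : Aˣ) : A)) with hf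
    have hfa : ∀ s, f s = a := by
      intro s
      rw [hf]
      simp only [hpow s, smul_smul, inv_mul_cancel₀ (pow_ne_zero s hζ0), one_smul]
    have ha_eq : a = (n : ℂ)⁻¹ • ∑ s ∈ Finset.range n, f s := by
      rw [Finset.sum_congr rfl (fun s _ => hfa s), Finset.sum_const, Finset.card_range,
        ← Nat.cast_smul_eq_nsmul ℂ, smul_smul, inv_mul_cancel₀ hncast, one_smul]
    have hdiff : a - (n : ℂ)⁻¹ • ∑ s ∈ Finset.range n, g s
        = (n : ℂ)⁻¹ • ∑ s ∈ Finset.range n, (f s - g s) := by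
      rw [Finset.sum_sub_distrib, smul_sub, ← ha_eq]
    -- bound each term
    have hterm : ∀ s ∈ Finset.range n, ‖f s - g s‖ ≤ 2 * n * ε := by
      intro s hs
      have hsn : (s : ℝ) ≤ n := by
        exact_mod_cast (Finset.mem_range.mp hs).le
      have hζs : ‖(ζ ^ s)⁻¹‖ = 1 := by
        rw [norm_inv, norm_pow, hζnorm, one_pow, inv_one]
      have hX : ((b ^ s : Aˣ) : A) = (b : A) ^ s := Units.val_pow_eq_pow_val b s
      have hX' : ((b' ^ s : Aˣ) : A) = (b' : A) ^ s := Units.val_pow_eq_pow_val b' s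
      have hY : (((b ^ s)⁻¹ : Aˣ) : A) = ((b⁻¹ : Aˣ) : A) ^ s := by
        rw [← inv_pow]; exact Units.val_pow_eq_pow_val b⁻¹ s
      have hY' : (((b' ^ s)⁻¹ : Aˣ) : A) = ((b'⁻¹ : Aˣ) : A) ^ s := by
        rw [← inv_pow]; exact Units.val_pow_eq_pow_val b'⁻¹ s
      have hd1 : ‖(b : A) ^ s - (b' : A) ^ s‖ ≤ n * ε := by
        calc ‖(b : A) ^ s - (b' : A) ^ s‖ ≤ s * ‖(b : A) - (b' : A)‖ :=
              pow_sub_pow_norm_le' _ _ hone hb1 hb'1 s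
          _ ≤ n * ε := mul_le_mul hsn he (norm_nonneg _) (Nat.cast_nonneg n)
      have hd2 : ‖((b⁻¹ : Aˣ) : A) ^ s - ((b'⁻¹ : Aˣ) : A) ^ s‖ ≤ n * ε := by
        calc ‖((b⁻¹ : Aˣ) : A) ^ s - ((b'⁻¹ : Aˣ) : A) ^ s‖
            ≤ s * ‖((b⁻¹ : Aˣ) : A) - ((b'⁻¹ : Aˣ) : A)‖ :=
              pow_sub_pow_norm_le' _ _ hone hbi1 hb'i1 s
          _ ≤ n * ε := mul_le_mul hsn hei (norm_nonneg _) (Nat.cast_nonneg n)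
      have hXn : ‖(b' : A) ^ s‖ ≤ 1 := norm_pow_le_one' _ hone hb'1 s
      have hYn : ‖((b⁻¹ : Aˣ) : A) ^ s‖ ≤ 1 := norm_pow_le_one' _ hone hbi1 s
      have hsplit : (b : A) ^ s * a * ((b⁻¹ : Aˣ) : A) ^ s -
          (b' : A) ^ s * a * ((b'⁻¹ : Aˣ) : A) ^ s
          = ((b : A) ^ s - (b' : A) ^ s) * a * ((b⁻¹ : Aˣ) : A) ^ s
            + (b' : A) ^ s * a * (((b⁻¹ : Aˣ) : A) ^ s - ((b'⁻¹ : Aˣ) : A) ^ s) := by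
        noncomm_ring
      calc ‖f s - g s‖
          = ‖(ζ ^ s)⁻¹ • ((b : A) ^ s * a * ((b⁻¹ : Aˣ) : A) ^ s
              - (b' : A) ^ s * a * ((b'⁻¹ : Aˣ) : A) ^ s)‖ := by
            rw [hf, hg]; simp only [hX, hX', hY, hY', ← smul_sub]
        _ = ‖(b : A) ^ s * a * ((b⁻¹ : Aˣ) : A) ^ s
              - (b' : A) ^ s * a * ((b'⁻¹ : Aˣ) : A) ^ s‖ := by
            rw [norm_smul, hζs, one_mul]
        _ ≤ ‖((b : A) ^ s - (b' : A) ^ s) * a * ((b⁻¹ : Aˣ) : A) ^ s‖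
              + ‖(b' : A) ^ s * a * (((b⁻¹ : Aˣ) : A) ^ s - ((b'⁻¹ : Aˣ) : A) ^ s)‖ := by
            rw [hsplit]; exact norm_add_le _ _
        _ ≤ ‖(b : A) ^ s - (b' : A) ^ s‖ * ‖a‖ * ‖((b⁻¹ : Aˣ) : A) ^ s‖
              + ‖(b' : A) ^ s‖ * ‖a‖ * ‖((b⁻¹ : Aˣ) : A) ^ s - ((b'⁻¹ : Aˣ) : A) ^ s‖ := by
            gcongr <;> exact le_trans (norm_mul_le _ _)
              (mul_le_mul_of_nonneg_right (norm_mul_le _ _) (norm_nonneg _))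
        _ ≤ (n * ε) * 1 * 1 + 1 * 1 * (n * ε) := by
            gcongr <;> first
              | exact hd1 | exact hd2 | exact ha | exact hXn | exact hYn
              | positivity
        _ = 2 * n * ε := by ring
    calc ‖a - (n : ℂ)⁻¹ • ∑ s ∈ Finset.range n, g s‖
        = ‖(n : ℂ)⁻¹‖ * ‖∑ s ∈ Finset.range n, (f s - g s)‖ := by
          rw [hdiff, norm_smul]
      _ ≤ ‖(n : ℂ)⁻¹‖ * (n * (2 * n * ε)) := by
          gcongr
          calc ‖∑ s ∈ Finset.range n, (f s - g s)‖
              ≤ ∑ s ∈ Finset.range n, ‖f s - g s‖ := norm_sum_le _ _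
            _ ≤ ∑ _s ∈ Finset.range n, (2 * n * ε) := Finset.sum_le_sum hterm
            _ = n * (2 * n * ε) := by rw [Finset.sum_const, Finset.card_range]; ring
      _ = 2 * n * ε := by
          rw [norm_inv, Complex.norm_natCast]
          field_simp
end
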